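/- Fix x' > 0 and y' ∈ ℝ^{n−1}, and define the End(Λ(V))-valued function K₀(t,x,y) = K_N(t,x,y,x',y')·(D∘L_{e₀})∘L_{exp(−t𝓡)} + K_D(t,x,y,x',y')·(L_{e₀}∘D)∘L_{exp(−t𝓡)}. Then for all t > 0, x ∈ ℝ, y ∈ ℝ^{n−1}: ∂_t K₀ − ∂_x² K₀ − Σ_{a=1}^{n−1} ∂²_{y_a} K₀ + L_𝓡∘K₀ = (K_N(t,x,y,x',y') − K_D(t,x,y,x',y'))·L_{𝓡₀}∘L_{exp(−t𝓡)}. (This is the statement that (∂_t + Δ + 𝓡)K₀ = 𝓡₀·(K_N − K_D)·e^{−t𝓡} for the model problem on the half-space.) -/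

import Mathlib

/-!
Model problem on the half-space. With `V = ℝⁿ ⊕ ℝⁿ`, `D` the contraction by the covector
dual to `e₀`, `L_a` left multiplication, `𝓡`, `𝓡₀` the curvature elements of `Λ(V)`, and
`K_D`, `K_N` the Dirichlet/Neumann heat kernels, the operator-valued kernel
`K₀(t,x,y) = K_N·(D∘L_{e₀})∘L_{exp(-t𝓡)} + K_D·(L_{e₀}∘D)∘L_{exp(-t𝓡)}`
satisfies `(∂_t + Δ + L_𝓡)K₀ = (K_N - K_D)·L_{𝓡₀}∘L_{exp(-t𝓡)}`.
Since `Λ(V)` is finite dimensional, the identity of `End(Λ(V))`-valued functions is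
formulated scalar-wise: applied to any `ω ∈ Λ(V)` and paired with any `ψ ∈ Λ(V)*`.
Since `𝓡` is nilpotent (`𝓡^k = 0` for `k > 2n`, as `𝓡` is a sum of degree-4 terms and
`Λ(V)` has top degree `2n`), the exponential `exp(-t𝓡)` in the finite-dimensional algebra
`Λ(V)` is the finite sum `Σ_{k≤2n} ((-t)^k/k!)·𝓡^k`.
-/

/-- `e_i`: the image in `Λ(ℝⁿ ⊕ ℝⁿ)` of the `i`-th standard basis vector of the first summand. -/
noncomputable def eB (n : ℕ) (i : Fin n) :
    ExteriorAlgebra ℝ ((Fin n → ℝ) × (Fin n → ℝ)) :=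
  ExteriorAlgebra.ι ℝ (Pi.single i 1, 0)

/-- `ê_i`: the image in `Λ(ℝⁿ ⊕ ℝⁿ)` of the `i`-th standard basis vector of the second summand. -/
noncomputable def eH (n : ℕ) (i : Fin n) :
    ExteriorAlgebra ℝ ((Fin n → ℝ) × (Fin n → ℝ)) :=
  ExteriorAlgebra.ι ℝ ((0 : Fin n → ℝ), Pi.single i 1)

/-- The covector `φ` with `φ(e₀) = 1`, vanishing on `e₁,…,e_{n-1}` and on all `ê_k`. -/
noncomputable def phi0 (n : ℕ) (hn : 0 < n) :
    Module.Dual ℝ ((Fin n → ℝ) × (Fin n → ℝ)) :=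
  (LinearMap.proj (⟨0, hn⟩ : Fin n) : (Fin n → ℝ) →ₗ[ℝ] ℝ).comp
    (LinearMap.fst ℝ (Fin n → ℝ) (Fin n → ℝ))

/-- `D`: interior product (left contraction) by `φ` on `Λ(ℝⁿ ⊕ ℝⁿ)`. -/
noncomputable def DOp (n : ℕ) (hn : 0 < n) :
    Module.End ℝ (ExteriorAlgebra ℝ ((Fin n → ℝ) × (Fin n → ℝ))) :=
  CliffordAlgebra.contractLeft (Q := (0 : QuadraticForm ℝ ((Fin n → ℝ) × (Fin n → ℝ))))
    (phi0 n hn)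

/-- `L_a`: left multiplication by `a` on `Λ(ℝⁿ ⊕ ℝⁿ)`. -/
noncomputable def mulL (n : ℕ) (a : ExteriorAlgebra ℝ ((Fin n → ℝ) × (Fin n → ℝ))) :
    Module.End ℝ (ExteriorAlgebra ℝ ((Fin n → ℝ) × (Fin n → ℝ))) :=
  LinearMap.mulLeft ℝ a

/-- `𝓡 = (1/8)·Σ_{i,j,k,l} R_{ijkl}·e_i·e_j·ê_k·ê_l`. -/
noncomputable def curvR (n : ℕ) (R : Fin n → Fin n → Fin n → Fin n → ℝ) :
    ExteriorAlgebra ℝ ((Fin n → ℝ) × (Fin n → ℝ)) :=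
  ((8 : ℝ)⁻¹) • ∑ i, ∑ j, ∑ k, ∑ l, R i j k l • (eB n i * eB n j * eH n k * eH n l)

/-- `𝓡₀ = (1/4)·Σ_{j,k,l} R_{0jkl}·e₀·e_j·ê_k·ê_l`. -/
noncomputable def curvR0 (n : ℕ) (hn : 0 < n) (R : Fin n → Fin n → Fin n → Fin n → ℝ) :
    ExteriorAlgebra ℝ ((Fin n → ℝ) × (Fin n → ℝ)) :=
  ((4 : ℝ)⁻¹) • ∑ j, ∑ k, ∑ l,
    R ⟨0, hn⟩ j k l • (eB n ⟨0, hn⟩ * eB n j * eH n k * eH n l)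

/-- `exp(-t𝓡)`, the exponential in the finite-dimensional algebra `Λ(V)`; since `𝓡` is
nilpotent with `𝓡^k = 0` for `k > 2n`, the exponential series is the finite sum below. -/
noncomputable def expNegCurvR (n : ℕ) (R : Fin n → Fin n → Fin n → Fin n → ℝ) (t : ℝ) :
    ExteriorAlgebra ℝ ((Fin n → ℝ) × (Fin n → ℝ)) :=
  ∑ k ∈ Finset.range (2 * n + 1), (((-t) ^ k / k.factorial : ℝ)) • curvR n R ^ k

/-- The Dirichlet heat kernel on the half-space. -/
noncomputable def KD (n : ℕ) (t x : ℝ) (y : Fin (n - 1) → ℝ) (x' : ℝ)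
    (y' : Fin (n - 1) → ℝ) : ℝ :=
  (4 * Real.pi * t) ^ (-(n : ℝ) / 2) *
    (Real.exp (-(x - x') ^ 2 / (4 * t)) - Real.exp (-(x + x') ^ 2 / (4 * t))) *
    Real.exp (-(∑ a, (y a - y' a) ^ 2) / (4 * t))

/-- The Neumann heat kernel on the half-space. -/
noncomputable def KN (n : ℕ) (t x : ℝ) (y : Fin (n - 1) → ℝ) (x' : ℝ)
    (y' : Fin (n - 1) → ℝ) : ℝ :=
  (4 * Real.pi * t) ^ (-(n : ℝ) / 2) *
    (Real.exp (-(x - x') ^ 2 / (4 * t)) + Real.exp (-(x + x') ^ 2 / (4 * t))) *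
    Real.exp (-(∑ a, (y a - y' a) ^ 2) / (4 * t))

/-- `K₀(t,x,y) = K_N·(D∘L_{e₀})∘L_{exp(-t𝓡)} + K_D·(L_{e₀}∘D)∘L_{exp(-t𝓡)}`. -/
noncomputable def K0 (n : ℕ) (hn : 0 < n) (R : Fin n → Fin n → Fin n → Fin n → ℝ)
    (x' : ℝ) (y' : Fin (n - 1) → ℝ) (t x : ℝ) (y : Fin (n - 1) → ℝ) :
    Module.End ℝ (ExteriorAlgebra ℝ ((Fin n → ℝ) × (Fin n → ℝ))) :=
  KN n t x y x' y' • (DOp n hn * mulL n (eB n ⟨0, hn⟩) * mulL n (expNegCurvR n R t)) +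
    KD n t x y x' y' • (mulL n (eB n ⟨0, hn⟩) * DOp n hn * mulL n (expNegCurvR n R t))


namespace ModelAux

variable {n : ℕ}

local notation "M" => (Fin n → ℝ) × (Fin n → ℝ)
local notation "ιι" => (ExteriorAlgebra.ι ℝ : _ →ₗ[ℝ] ExteriorAlgebra ℝ ((Fin n → ℝ) × (Fin n → ℝ)))

lemma Dvm (hn : 0 < n) (v : M) (u : ExteriorAlgebra ℝ M) :
    DOp n hn (ιι v * u) = phi0 n hn v • u - ιι v * DOp n hn u :=
  CliffordAlgebra.contractLeft_ι_mul (Q := (0 : QuadraticForm ℝ _)) (phi0 n hn) v u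

lemma phi_vB (hn : 0 < n) (i : Fin n) :
    phi0 n hn (Pi.single i 1, 0) = if i = ⟨0, hn⟩ then 1 else 0 := by
  simp [phi0, Pi.single_apply, eq_comm]

lemma phi_vH (hn : 0 < n) (i : Fin n) :
    phi0 n hn ((0 : Fin n → ℝ), Pi.single i 1) = 0 := by simp [phi0]

lemma swap (a b : M) : ιι a * ιι b = -(ιι b * ιι a) :=
  eq_neg_of_add_eq_zero_left (ExteriorAlgebra.ι_add_mul_swap a b)

lemma comm_vec (v w : M) (x : ExteriorAlgebra ℝ M) :
    ιι v * (ιι w * x) = -(ιι w * (ιι v * x)) := by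
  rw [← mul_assoc, swap, neg_mul, mul_assoc]

lemma comm3 (v a b c : M) :
    ιι v * (ιι a * ιι b * ιι c) = -(ιι a * ιι b * ιι c * ιι v) := by
  simp only [mul_assoc]
  rw [comm_vec v a, comm_vec v b, swap v c]
  simp [mul_assoc]

lemma comm4 (v a b c d : M) :
    ιι v * (ιι a * ιι b * ιι c * ιι d) = ιι a * ιι b * ιι c * ιι d * ιι v := by
  simp only [mul_assoc]
  rw [comm_vec v a, comm_vec v b, comm_vec v c, swap v d]
  simp [mul_assoc]

lemma D_four (hn : 0 < n) (v1 v2 v3 v4 : M) (h3 : phi0 n hn v3 = 0) (h4 : phi0 n hn v4 = 0)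
    (u : ExteriorAlgebra ℝ M) :
    DOp n hn (ιι v1 * ιι v2 * ιι v3 * ιι v4 * u) =
      (phi0 n hn v1 • (ιι v2 * ιι v3 * ιι v4) - phi0 n hn v2 • (ιι v1 * ιι v3 * ιι v4)) * u
        + ιι v1 * ιι v2 * ιι v3 * ιι v4 * DOp n hn u := by
  have e4 : ∀ w, DOp n hn (ιι v4 * w) = -(ιι v4 * DOp n hn w) := fun w => by
    rw [Dvm hn, h4, zero_smul, zero_sub]
  have e3 : ∀ w, DOp n hn (ιι v3 * (ιι v4 * w)) = ιι v3 * (ιι v4 * DOp n hn w) := fun w => by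
    rw [Dvm hn, h3, zero_smul, e4, zero_sub, mul_neg, neg_neg]
  have assoc : ιι v1 * ιι v2 * ιι v3 * ιι v4 * u = ιι v1 * (ιι v2 * (ιι v3 * (ιι v4 * u))) := by
    simp [mul_assoc]
  rw [assoc, Dvm hn, Dvm hn, e3]
  simp only [mul_sub, mul_smul_comm, smul_mul_assoc, sub_mul, add_mul, smul_sub]
  simp [mul_assoc]
  abel

end ModelAux

namespace ModelAux
variable {n : ℕ}
local notation "M" => (Fin n → ℝ) × (Fin n → ℝ)
local notation "ιι" => (ExteriorAlgebra.ι ℝ : _ →ₗ[ℝ] ExteriorAlgebra ℝ ((Fin n → ℝ) × (Fin n → ℝ)))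

lemma D_quartic (hn : 0 < n) (i j k l : Fin n) (u : ExteriorAlgebra ℝ M) :
    DOp n hn (eB n i * eB n j * eH n k * eH n l * u) =
      ((if i = ⟨0, hn⟩ then (1:ℝ) else 0) • (eB n j * eH n k * eH n l)
        - (if j = ⟨0, hn⟩ then (1:ℝ) else 0) • (eB n i * eH n k * eH n l)) * u
        + eB n i * eB n j * eH n k * eH n l * DOp n hn u := by
  have := D_four hn (Pi.single i 1, 0) (Pi.single j 1, 0) ((0 : Fin n → ℝ), Pi.single k 1)
    ((0 : Fin n → ℝ), Pi.single l 1) (phi_vH hn k) (phi_vH hn l) u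
  simpa only [eB, eH, phi_vB hn] using this

section PairD
variable (hn : 0 < n)

lemma pair_smul {a s : ExteriorAlgebra ℝ M} (c : ℝ)
    (h : ∀ u, DOp n hn (a * u) = s * u + a * DOp n hn u) :
    ∀ u, DOp n hn ((c • a) * u) = (c • s) * u + (c • a) * DOp n hn u := by
  intro u
  simp [smul_mul_assoc, h u, smul_add]

lemma pair_sum {ι : Type*} (t : Finset ι) (F G : ι → ExteriorAlgebra ℝ M)
    (h : ∀ x ∈ t, ∀ u, DOp n hn (F x * u) = G x * u + F x * DOp n hn u) :
    ∀ u, DOp n hn ((∑ x ∈ t, F x) * u)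
      = (∑ x ∈ t, G x) * u + (∑ x ∈ t, F x) * DOp n hn u := by
  intro u
  rw [Finset.sum_mul, map_sum, Finset.sum_congr rfl (fun x hx => h x hx u),
    Finset.sum_add_distrib, Finset.sum_mul, Finset.sum_mul]

/-- The unsimplified contraction of `curvR`. -/
noncomputable def SRfull (R : Fin n → Fin n → Fin n → Fin n → ℝ) : ExteriorAlgebra ℝ M :=
  ((8 : ℝ)⁻¹) • ∑ i, ∑ j, ∑ k, ∑ l, R i j k l •
    ((if i = (⟨0, hn⟩ : Fin n) then (1:ℝ) else 0) • (eB n j * eH n k * eH n l)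
      - (if j = (⟨0, hn⟩ : Fin n) then (1:ℝ) else 0) • (eB n i * eH n k * eH n l))

lemma D_curvR_mul_full (R : Fin n → Fin n → Fin n → Fin n → ℝ) (u : ExteriorAlgebra ℝ M) :
    DOp n hn (curvR n R * u) = SRfull hn R * u + curvR n R * DOp n hn u := by
  revert u
  unfold curvR SRfull
  apply pair_smul
  apply pair_sum; intro i _
  apply pair_sum; intro j _
  apply pair_sum; intro k _
  apply pair_sum; intro l _
  intro u
  have h := D_quartic hn i j k l u
  rw [smul_mul_assoc, map_smul, h]
  simp [smul_add, smul_mul_assoc]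

/-- `S = D𝓡`, the contraction of the curvature element. -/
noncomputable def SR (R : Fin n → Fin n → Fin n → Fin n → ℝ) : ExteriorAlgebra ℝ M :=
  ((4 : ℝ)⁻¹) • ∑ j, ∑ k, ∑ l, R ⟨0, hn⟩ j k l • (eB n j * eH n k * eH n l)

lemma SRfull_eq_SR (R : Fin n → Fin n → Fin n → Fin n → ℝ)
    (hR : ∀ i j k l, R i j k l = - R j i k l) : SRfull hn R = SR hn R := by
  set z : Fin n := ⟨0, hn⟩ with hz
  unfold SRfull SR
  have split : (∑ i, ∑ j, ∑ k, ∑ l, R i j k l •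
      ((if i = z then (1:ℝ) else 0) • (eB n j * eH n k * eH n l)
        - (if j = z then (1:ℝ) else 0) • (eB n i * eH n k * eH n l)))
    = (∑ i, ∑ j, ∑ k, ∑ l, R i j k l •
        ((if i = z then (1:ℝ) else 0) • (eB n j * eH n k * eH n l)))
      - (∑ i, ∑ j, ∑ k, ∑ l, R i j k l •
        ((if j = z then (1:ℝ) else 0) • (eB n i * eH n k * eH n l))) := by
    simp [smul_sub, Finset.sum_sub_distrib]
  rw [split]
  have e1 : (∑ i, ∑ j, ∑ k, ∑ l, R i j k l •
      ((if i = z then (1:ℝ) else 0) • (eB n j * eH n k * eH n l)))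
    = ∑ j, ∑ k, ∑ l, R z j k l • (eB n j * eH n k * eH n l) := by
    rw [Fintype.sum_eq_single z (fun i hi => by simp [hi])]
    simp
  have e2 : (∑ i, ∑ j, ∑ k, ∑ l, R i j k l •
      ((if j = z then (1:ℝ) else 0) • (eB n i * eH n k * eH n l)))
    = -∑ j, ∑ k, ∑ l, R z j k l • (eB n j * eH n k * eH n l) := by
    have inner : ∀ i : Fin n, (∑ j, ∑ k, ∑ l, R i j k l •
        ((if j = z then (1:ℝ) else 0) • (eB n i * eH n k * eH n l)))
      = ∑ k, ∑ l, R i z k l • (eB n i * eH n k * eH n l) := by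
      intro i
      rw [Fintype.sum_eq_single z (fun j hj => by simp [hj])]
      simp
    rw [Finset.sum_congr rfl fun i _ => inner i]
    rw [← Finset.sum_neg_distrib]
    refine Finset.sum_congr rfl fun i _ => ?_
    rw [← Finset.sum_neg_distrib]
    refine Finset.sum_congr rfl fun k _ => ?_
    rw [← Finset.sum_neg_distrib]
    refine Finset.sum_congr rfl fun l _ => ?_
    rw [hR i z k l, neg_smul]
  rw [e1, e2, sub_neg_eq_add, ← two_smul ℝ, smul_smul]
  norm_num
  rfl

end PairD
end ModelAux

namespace ModelAux
variable {n : ℕ}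
local notation "M" => (Fin n → ℝ) × (Fin n → ℝ)
local notation "ιι" => (ExteriorAlgebra.ι ℝ : _ →ₗ[ℝ] ExteriorAlgebra ℝ ((Fin n → ℝ) × (Fin n → ℝ)))

variable (hn : 0 < n) (R : Fin n → Fin n → Fin n → Fin n → ℝ)

lemma comm4' (v : M) (i j k l : Fin n) :
    ιι v * (eB n i * eB n j * eH n k * eH n l) = eB n i * eB n j * eH n k * eH n l * ιι v := by
  simpa [eB, eH] using comm4 v (Pi.single i 1, 0) (Pi.single j 1, 0)
    ((0 : Fin n → ℝ), Pi.single k 1) ((0 : Fin n → ℝ), Pi.single l 1)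

lemma comm3' (v : M) (j k l : Fin n) :
    ιι v * (eB n j * eH n k * eH n l) = -(eB n j * eH n k * eH n l * ιι v) := by
  simpa [eB, eH] using comm3 v (Pi.single j 1, 0)
    ((0 : Fin n → ℝ), Pi.single k 1) ((0 : Fin n → ℝ), Pi.single l 1)

lemma e0_comm_curvR : eB n ⟨0, hn⟩ * curvR n R = curvR n R * eB n ⟨0, hn⟩ := by
  simp only [curvR, mul_smul_comm, smul_mul_assoc, Finset.mul_sum, Finset.sum_mul]
  congr 1
  refine Finset.sum_congr rfl fun i _ => Finset.sum_congr rfl fun j _ =>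
    Finset.sum_congr rfl fun k _ => Finset.sum_congr rfl fun l _ => ?_
  congr 1
  show ιι (Pi.single (⟨0, hn⟩ : Fin n) 1, 0) * _ = _
  rw [comm4']
  rfl

lemma e0_mul_SR : eB n ⟨0, hn⟩ * SR hn R = curvR0 n hn R := by
  simp only [SR, curvR0, mul_smul_comm, Finset.mul_sum]
  refine congrArg ((4 : ℝ)⁻¹ • ·) ?_
  refine Finset.sum_congr rfl fun j _ => Finset.sum_congr rfl fun k _ =>
    Finset.sum_congr rfl fun l _ => ?_
  congr 1
  simp [mul_assoc]

lemma SR_mul_e0 : SR hn R * eB n ⟨0, hn⟩ = -curvR0 n hn R := by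
  simp only [SR, curvR0, smul_mul_assoc, Finset.sum_mul, ← smul_neg, ← Finset.sum_neg_distrib]
  refine congrArg ((4 : ℝ)⁻¹ • ·) ?_
  refine Finset.sum_congr rfl fun j _ => Finset.sum_congr rfl fun k _ =>
    Finset.sum_congr rfl fun l _ => ?_
  congr 1
  have := comm3' (n := n) (Pi.single (⟨0, hn⟩ : Fin n) 1, 0) j k l
  rw [show ιι (Pi.single (⟨0, hn⟩ : Fin n) 1, 0) = eB n ⟨0, hn⟩ from rfl] at this
  rw [show eB n ⟨0, hn⟩ * eB n j * eH n k * eH n l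
      = eB n ⟨0, hn⟩ * (eB n j * eH n k * eH n l) from by simp [mul_assoc],
    this, neg_neg]

lemma D_e0_mul (u : ExteriorAlgebra ℝ M) :
    DOp n hn (eB n ⟨0, hn⟩ * u) = u - eB n ⟨0, hn⟩ * DOp n hn u := by
  have := Dvm hn (Pi.single (⟨0, hn⟩ : Fin n) 1, 0) u
  rw [phi_vB hn, if_pos rfl, one_smul] at this
  simpa [eB] using this

lemma C1 (hR : ∀ i j k l, R i j k l = - R j i k l) (θ : ExteriorAlgebra ℝ M) :
    curvR n R * DOp n hn (eB n ⟨0, hn⟩ * θ)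
      - DOp n hn (eB n ⟨0, hn⟩ * (curvR n R * θ)) = curvR0 n hn R * θ := by
  have dR : DOp n hn (curvR n R * θ) = SR hn R * θ + curvR n R * DOp n hn θ := by
    rw [D_curvR_mul_full hn R θ, SRfull_eq_SR hn R hR]
  rw [D_e0_mul hn θ, D_e0_mul hn (curvR n R * θ), dR]
  rw [mul_sub, mul_add, ← mul_assoc, ← mul_assoc, e0_mul_SR hn R,
    ← mul_assoc (eB n ⟨0, hn⟩) (curvR n R) (DOp n hn θ), e0_comm_curvR hn R]
  abel

lemma C2 (hR : ∀ i j k l, R i j k l = - R j i k l) (θ : ExteriorAlgebra ℝ M) :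
    curvR n R * (eB n ⟨0, hn⟩ * DOp n hn θ)
      - eB n ⟨0, hn⟩ * DOp n hn (curvR n R * θ) = -(curvR0 n hn R * θ) := by
  have dR : DOp n hn (curvR n R * θ) = SR hn R * θ + curvR n R * DOp n hn θ := by
    rw [D_curvR_mul_full hn R θ, SRfull_eq_SR hn R hR]
  rw [dR, mul_add, ← mul_assoc, ← mul_assoc, e0_mul_SR hn R,
    ← mul_assoc (eB n ⟨0, hn⟩) (curvR n R) (DOp n hn θ), e0_comm_curvR hn R]
  abel

lemma exterior_top_zero (K : ℕ) (hK : 2 * n < K) :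
    (⋀[ℝ]^K ((Fin n → ℝ) × (Fin n → ℝ)) : Submodule ℝ (ExteriorAlgebra ℝ M)) = ⊥ := by
  rw [← ExteriorAlgebra.ιMulti_span_fixedDegree, Submodule.span_eq_bot]
  intro x hx
  obtain ⟨v, rfl⟩ := hx
  refine AlternatingMap.map_linearDependent _ v fun h => ?_
  have hcard := h.fintype_card_le_finrank
  have hrank : Module.finrank ℝ ((Fin n → ℝ) × (Fin n → ℝ)) = 2 * n := by
    rw [Module.finrank_prod, Module.finrank_fintype_fun_eq_card]
    simp [two_mul]
  rw [hrank, Fintype.card_fin] at hcard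
  omega

lemma curvR_nilpotent : curvR n R ^ (2 * n + 1) = 0 := by
  have hι : ∀ v : M, ιι v ∈ LinearMap.range ιι := fun v => LinearMap.mem_range_self _ v
  have hmem : curvR n R ∈ (⋀[ℝ]^4 ((Fin n → ℝ) × (Fin n → ℝ)) :
      Submodule ℝ (ExteriorAlgebra ℝ M)) := by
    have h4 : (LinearMap.range ιι) ^ (4:ℕ)
        = ((LinearMap.range ιι * LinearMap.range ιι) * LinearMap.range ιι)
            * LinearMap.range ιι := by
      rw [pow_succ, pow_succ, pow_succ, pow_one]
    refine Submodule.smul_mem _ _ (Submodule.sum_mem _ fun i _ => Submodule.sum_mem _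
      fun j _ => Submodule.sum_mem _ fun k _ => Submodule.sum_mem _ fun l _ =>
      Submodule.smul_mem _ _ ?_)
    show _ ∈ (LinearMap.range ιι) ^ (4:ℕ)
    rw [h4]
    exact Submodule.mul_mem_mul (Submodule.mul_mem_mul (Submodule.mul_mem_mul
      (LinearMap.mem_range_self _ _) (LinearMap.mem_range_self _ _))
      (LinearMap.mem_range_self _ _)) (LinearMap.mem_range_self _ _)
  have hpow : curvR n R ^ (2 * n + 1) ∈
      (⋀[ℝ]^(4 * (2 * n + 1)) ((Fin n → ℝ) × (Fin n → ℝ)) :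
        Submodule ℝ (ExteriorAlgebra ℝ M)) := by
    rw [show (⋀[ℝ]^(4 * (2 * n + 1)) ((Fin n → ℝ) × (Fin n → ℝ)) :
        Submodule ℝ (ExteriorAlgebra ℝ M)) = (⋀[ℝ]^4 ((Fin n → ℝ) × (Fin n → ℝ))) ^ (2 * n + 1)
      from pow_mul _ 4 (2 * n + 1)]
    exact Submodule.pow_mem_pow _ hmem _
  rw [exterior_top_zero (4 * (2 * n + 1)) (by omega)] at hpow
  simpa using hpow

end ModelAux

namespace ModelAux

/-- Gaussian profile `(4πτ)^ν e^{-q/4τ}`. -/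
noncomputable def gA (ν τ q : ℝ) : ℝ := (4 * Real.pi * τ) ^ ν * Real.exp (-q / (4 * τ))

lemma hasDerivAt_gA_t (ν q t : ℝ) (ht : 0 < t) :
    HasDerivAt (fun τ => gA ν τ q) (gA ν t q * (ν / t + q / (4 * t ^ 2))) t := by
  have hpi : (0:ℝ) < 4 * Real.pi := by positivity
  have hpos : 0 < 4 * Real.pi * t := by positivity
  have h1 : HasDerivAt (fun τ : ℝ => 4 * Real.pi * τ) (4 * Real.pi) t := by
    simpa using (hasDerivAt_id t).const_mul (4 * Real.pi)
  have h2 : HasDerivAt (fun τ : ℝ => (4 * Real.pi * τ) ^ ν)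
      (ν * (4 * Real.pi * t) ^ (ν - 1) * (4 * Real.pi)) t :=
    (Real.hasDerivAt_rpow_const (Or.inl hpos.ne')).comp t h1
  have h3 : HasDerivAt (fun τ : ℝ => -q / (4 * τ)) (q / (4 * t ^ 2)) t := by
    have : HasDerivAt (fun τ : ℝ => τ⁻¹) (-(t ^ 2)⁻¹) t := hasDerivAt_inv ht.ne'
    have h4 := this.const_mul (-q / 4)
    have : (fun τ : ℝ => -q / 4 * τ⁻¹) = fun τ : ℝ => -q / (4 * τ) := by
      funext τ; ring
    rw [this] at h4
    refine h4.congr_deriv (Eq.symm ?_)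
    field_simp
  have h5 : HasDerivAt (fun τ : ℝ => Real.exp (-q / (4 * τ)))
      (Real.exp (-q / (4 * t)) * (q / (4 * t ^ 2))) t := h3.exp
  have h6 := h2.mul h5
  refine h6.congr_deriv (Eq.symm ?_)
  unfold gA
  rw [Real.rpow_sub_one hpos.ne']
  field_simp

lemma hasDerivAt_gA_x (ν t c C : ℝ) (ht : 0 < t) (s : ℝ) :
    HasDerivAt (fun s => gA ν t ((s - c) ^ 2 + C))
      (gA ν t ((s - c) ^ 2 + C) * (-(s - c) / (2 * t))) s := by
  have h0 : HasDerivAt (fun s : ℝ => -((s - c) ^ 2 + C) / (4 * t))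
      (-(s - c) / (2 * t)) s := by
    have h1 : HasDerivAt (fun s : ℝ => (s - c) ^ 2 + C) (2 * (s - c)) s := by
      simpa using (((hasDerivAt_id s).sub_const c).pow 2).add_const C
    have h2 := h1.const_mul (-(4 * t)⁻¹)
    have e : (fun s : ℝ => -(4 * t)⁻¹ * ((s - c) ^ 2 + C))
        = fun s : ℝ => -((s - c) ^ 2 + C) / (4 * t) := by funext s; ring
    rw [e] at h2
    refine h2.congr_deriv (Eq.symm ?_)
    field_simp
    ring
  have := (h0.exp).const_mul ((4 * Real.pi * t) ^ ν)
  refine this.congr_deriv (Eq.symm ?_)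
  unfold gA
  ring

lemma hasDerivAt_gA_x2 (ν t c C : ℝ) (ht : 0 < t) (s : ℝ) :
    HasDerivAt (fun s => gA ν t ((s - c) ^ 2 + C) * (-(s - c) / (2 * t)))
      (gA ν t ((s - c) ^ 2 + C) * ((s - c) ^ 2 / (4 * t ^ 2) - 1 / (2 * t))) s := by
  have h1 := hasDerivAt_gA_x ν t c C ht s
  have h2 : HasDerivAt (fun s : ℝ => -(s - c) / (2 * t)) (-(1 / (2 * t))) s := by
    have h := ((hasDerivAt_id s).sub_const c).const_mul (-(2 * t)⁻¹)
    simp only [id_eq] at h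
    have e : (fun s : ℝ => -(2 * t)⁻¹ * (s - c)) = fun s : ℝ => -(s - c) / (2 * t) := by
      funext s; ring
    rw [e] at h
    refine h.congr_deriv (Eq.symm ?_)
    field_simp
  have := h1.mul h2
  refine this.congr_deriv (Eq.symm ?_)
  ring

end ModelAux

namespace ModelAux2

lemma series_shift (N : ℕ) (aF aP aW : ℕ → ℝ) (τ : ℝ)
    (hrec : ∀ k, aP k = aW k + aF (k + 1)) (hend : aF (N + 1) = 0) :
    (∑ k ∈ Finset.range (N + 1), ((k : ℝ) * (-τ) ^ (k - 1) * (-1) / k.factorial) * aF k)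
      + ∑ k ∈ Finset.range (N + 1), (-τ) ^ k / k.factorial * aP k
    = ∑ k ∈ Finset.range (N + 1), (-τ) ^ k / k.factorial * aW k := by
  have h1 : (∑ k ∈ Finset.range (N + 1), ((k : ℝ) * (-τ) ^ (k - 1) * (-1) / k.factorial) * aF k)
      = -∑ k ∈ Finset.range N, (-τ) ^ k / k.factorial * aF (k + 1) := by
    rw [Finset.sum_range_succ']
    simp only [Nat.cast_zero, zero_mul, mul_zero, zero_div]
    rw [add_zero, ← Finset.sum_neg_distrib]
    refine Finset.sum_congr rfl fun k _ => ?_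
    have hf : ((k + 1).factorial : ℝ) = (k + 1) * k.factorial := by
      rw [Nat.factorial_succ]; push_cast; ring
    have hx : (k + 1) - 1 = k := by omega
    rw [hx, hf]
    have hk : (k.factorial : ℝ) ≠ 0 := Nat.cast_ne_zero.2 (Nat.factorial_ne_zero k)
    field_simp
    push_cast
    ring
  have h2 : ∑ k ∈ Finset.range (N + 1), (-τ) ^ k / k.factorial * aP k
      = (∑ k ∈ Finset.range (N + 1), (-τ) ^ k / k.factorial * aW k)
        + ∑ k ∈ Finset.range N, (-τ) ^ k / k.factorial * aF (k + 1) := by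
    simp only [hrec, mul_add, Finset.sum_add_distrib]
    congr 1
    rw [Finset.sum_range_succ, hend, mul_zero, add_zero]
  rw [h1, h2]; ring

lemma sum_update (m : ℕ) (y y' : Fin m → ℝ) (a : Fin m) (s : ℝ) :
    ∑ b, (Function.update y a s b - y' b) ^ 2
      = (s - y' a) ^ 2 + ∑ b ∈ Finset.univ.erase a, (y b - y' b) ^ 2 := by
  rw [← Finset.add_sum_erase _ (fun b => (Function.update y a s b - y' b) ^ 2)
    (Finset.mem_univ a)]
  congr 1
  · simp
  · exact Finset.sum_congr rfl fun b hb => by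
      rw [Function.update_of_ne (Finset.ne_of_mem_erase hb)]

lemma recomb (m : ℕ) (y y' : Fin m → ℝ) (a : Fin m) :
    (y a - y' a) ^ 2 + ∑ b ∈ Finset.univ.erase a, (y b - y' b) ^ 2
      = ∑ b, (y b - y' b) ^ 2 :=
  Finset.add_sum_erase Finset.univ (fun b => (y b - y' b) ^ 2) (Finset.mem_univ a)

end ModelAux2

namespace ModelAux
variable {n : ℕ} (hn : 0 < n) (R : Fin n → Fin n → Fin n → Fin n → ℝ)
  (ω : ExteriorAlgebra ℝ ((Fin n → ℝ) × (Fin n → ℝ)))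
  (ψ : Module.Dual ℝ (ExteriorAlgebra ℝ ((Fin n → ℝ) × (Fin n → ℝ))))

lemma EXP (τ ξ : ℝ) (yy : Fin (n-1) → ℝ) (x' : ℝ) (y' : Fin (n-1) → ℝ) :
    ψ (K0 n hn R x' y' τ ξ yy ω)
      = KN n τ ξ yy x' y' * (∑ k ∈ Finset.range (2 * n + 1),
          (-τ) ^ k / k.factorial * ψ (DOp n hn (eB n ⟨0, hn⟩ * (curvR n R ^ k * ω))))
        + KD n τ ξ yy x' y' * (∑ k ∈ Finset.range (2 * n + 1),
          (-τ) ^ k / k.factorial * ψ (eB n ⟨0, hn⟩ * DOp n hn (curvR n R ^ k * ω))) := by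
  simp only [K0, LinearMap.add_apply, LinearMap.smul_apply, Module.End.mul_apply, mulL,
    LinearMap.mulLeft_apply, expNegCurvR, Finset.sum_mul, smul_mul_assoc, Finset.mul_sum,
    mul_smul_comm, map_sum, map_smul, map_add, smul_eq_mul, Finset.mul_sum]

lemma RCT (τ ξ : ℝ) (yy : Fin (n-1) → ℝ) (x' : ℝ) (y' : Fin (n-1) → ℝ) :
    ψ ((mulL n (curvR n R) * K0 n hn R x' y' τ ξ yy) ω)
      = KN n τ ξ yy x' y' * (∑ k ∈ Finset.range (2 * n + 1),
          (-τ) ^ k / k.factorial *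
            ψ (curvR n R * DOp n hn (eB n ⟨0, hn⟩ * (curvR n R ^ k * ω))))
        + KD n τ ξ yy x' y' * (∑ k ∈ Finset.range (2 * n + 1),
          (-τ) ^ k / k.factorial *
            ψ (curvR n R * (eB n ⟨0, hn⟩ * DOp n hn (curvR n R ^ k * ω)))) := by
  simp only [K0, LinearMap.add_apply, LinearMap.smul_apply, Module.End.mul_apply, mulL,
    LinearMap.mulLeft_apply, expNegCurvR, Finset.sum_mul, smul_mul_assoc, Finset.mul_sum,
    mul_smul_comm, map_sum, map_smul, map_add, smul_eq_mul, Finset.mul_sum]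

lemma WEXP (τ : ℝ) :
    ψ ((mulL n (curvR0 n hn R) * mulL n (expNegCurvR n R τ)) ω)
      = ∑ k ∈ Finset.range (2 * n + 1),
          (-τ) ^ k / k.factorial * ψ (curvR0 n hn R * (curvR n R ^ k * ω)) := by
  simp only [Module.End.mul_apply, mulL, LinearMap.mulLeft_apply, expNegCurvR, Finset.sum_mul,
    smul_mul_assoc, Finset.mul_sum, mul_smul_comm, map_sum, map_smul, smul_eq_mul]

end ModelAux

namespace ModelAux

section Main
variable (n : ℕ) (hn : 0 < n) (R : Fin n → Fin n → Fin n → Fin n → ℝ)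
  (ω : ExteriorAlgebra ℝ ((Fin n → ℝ) × (Fin n → ℝ)))
  (ψ : Module.Dual ℝ (ExteriorAlgebra ℝ ((Fin n → ℝ) × (Fin n → ℝ))))

noncomputable def Fs (τ : ℝ) : ℝ :=
  ∑ k ∈ Finset.range (2 * n + 1), (-τ) ^ k / k.factorial *
    ψ (DOp n hn (eB n ⟨0, hn⟩ * (curvR n R ^ k * ω)))

noncomputable def Gs (τ : ℝ) : ℝ :=
  ∑ k ∈ Finset.range (2 * n + 1), (-τ) ^ k / k.factorial *
    ψ (eB n ⟨0, hn⟩ * DOp n hn (curvR n R ^ k * ω))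

noncomputable def dFs (τ : ℝ) : ℝ :=
  ∑ k ∈ Finset.range (2 * n + 1), ((k : ℝ) * (-τ) ^ (k - 1) * (-1) / k.factorial) *
    ψ (DOp n hn (eB n ⟨0, hn⟩ * (curvR n R ^ k * ω)))

noncomputable def dGs (τ : ℝ) : ℝ :=
  ∑ k ∈ Finset.range (2 * n + 1), ((k : ℝ) * (-τ) ^ (k - 1) * (-1) / k.factorial) *
    ψ (eB n ⟨0, hn⟩ * DOp n hn (curvR n R ^ k * ω))

noncomputable def Ps (τ : ℝ) : ℝ :=
  ∑ k ∈ Finset.range (2 * n + 1), (-τ) ^ k / k.factorial *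
    ψ (curvR n R * DOp n hn (eB n ⟨0, hn⟩ * (curvR n R ^ k * ω)))

noncomputable def Qs (τ : ℝ) : ℝ :=
  ∑ k ∈ Finset.range (2 * n + 1), (-τ) ^ k / k.factorial *
    ψ (curvR n R * (eB n ⟨0, hn⟩ * DOp n hn (curvR n R ^ k * ω)))

noncomputable def Ws (τ : ℝ) : ℝ :=
  ∑ k ∈ Finset.range (2 * n + 1), (-τ) ^ k / k.factorial *
    ψ (curvR0 n hn R * (curvR n R ^ k * ω))

lemma hasDerivAt_Fs (τ : ℝ) :
    HasDerivAt (Fs n hn R ω ψ) (dFs n hn R ω ψ τ) τ := by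
  unfold Fs dFs
  refine HasDerivAt.fun_sum fun k _ => ?_
  have h : HasDerivAt (fun τ : ℝ => (-τ) ^ k) ((k : ℝ) * (-τ) ^ (k - 1) * (-1)) τ := by
    exact (hasDerivAt_pow k (-τ)).comp τ (hasDerivAt_neg τ)
  exact (h.div_const _).mul_const _

lemma hasDerivAt_Gs (τ : ℝ) :
    HasDerivAt (Gs n hn R ω ψ) (dGs n hn R ω ψ τ) τ := by
  unfold Gs dGs
  refine HasDerivAt.fun_sum fun k _ => ?_
  have h : HasDerivAt (fun τ : ℝ => (-τ) ^ k) ((k : ℝ) * (-τ) ^ (k - 1) * (-1)) τ := by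
    exact (hasDerivAt_pow k (-τ)).comp τ (hasDerivAt_neg τ)
  exact (h.div_const _).mul_const _

lemma ID1 (hR : ∀ i j k l, R i j k l = - R j i k l) (τ : ℝ) :
    dFs n hn R ω ψ τ + Ps n hn R ω ψ τ = Ws n hn R ω ψ τ := by
  unfold dFs Ps Ws
  refine ModelAux2.series_shift (2 * n) _ _ _ τ (fun k => ?_) ?_
  · have h := congrArg ψ (C1 hn R hR (curvR n R ^ k * ω))
    rw [map_sub] at h
    have hp : curvR n R ^ (k + 1) * ω = curvR n R * (curvR n R ^ k * ω) := by
      rw [pow_succ', mul_assoc]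
    rw [hp]
    linarith
  · have h0 : curvR n R ^ (2 * n + 1) = 0 := curvR_nilpotent R
    rw [h0]
    simp

lemma ID2 (hR : ∀ i j k l, R i j k l = - R j i k l) (τ : ℝ) :
    dGs n hn R ω ψ τ + Qs n hn R ω ψ τ = -Ws n hn R ω ψ τ := by
  unfold dGs Qs Ws
  have h := ModelAux2.series_shift (2 * n)
    (fun k => ψ (eB n ⟨0, hn⟩ * DOp n hn (curvR n R ^ k * ω)))
    (fun k => ψ (curvR n R * (eB n ⟨0, hn⟩ * DOp n hn (curvR n R ^ k * ω))))
    (fun k => -ψ (curvR0 n hn R * (curvR n R ^ k * ω))) τ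
    (fun k => ?_) ?_
  · simpa [mul_neg, Finset.sum_neg_distrib] using h
  · have h := congrArg ψ (C2 hn R hR (curvR n R ^ k * ω))
    rw [map_sub, map_neg] at h
    have hp : curvR n R ^ (k + 1) * ω = curvR n R * (curvR n R ^ k * ω) := by
      rw [pow_succ', mul_assoc]
    show ψ (curvR n R * (eB n ⟨0, hn⟩ * DOp n hn (curvR n R ^ k * ω)))
      = -ψ (curvR0 n hn R * (curvR n R ^ k * ω))
        + ψ (eB n ⟨0, hn⟩ * DOp n hn (curvR n R ^ (k + 1) * ω))
    rw [hp]
    linarith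
  · have h0 : curvR n R ^ (2 * n + 1) = 0 := curvR_nilpotent R
    show ψ (eB n ⟨0, hn⟩ * DOp n hn (curvR n R ^ (2 * n + 1) * ω)) = 0
    rw [h0]
    simp

lemma KN_eq (t ξ x' : ℝ) (yy y' : Fin (n - 1) → ℝ) :
    KN n t ξ yy x' y'
      = gA (-(n : ℝ) / 2) t ((ξ - x') ^ 2 + ∑ a, (yy a - y' a) ^ 2)
        + gA (-(n : ℝ) / 2) t ((ξ - -x') ^ 2 + ∑ a, (yy a - y' a) ^ 2) := by
  have comb : ∀ a b : ℝ, Real.exp (-(a + b) / (4 * t))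
      = Real.exp (-a / (4 * t)) * Real.exp (-b / (4 * t)) := by
    intro a b; rw [← Real.exp_add]; congr 1; ring
  unfold KN gA
  rw [comb, comb, show (ξ - -x') ^ 2 = (ξ + x') ^ 2 by ring]
  ring

lemma KD_eq (t ξ x' : ℝ) (yy y' : Fin (n - 1) → ℝ) :
    KD n t ξ yy x' y'
      = gA (-(n : ℝ) / 2) t ((ξ - x') ^ 2 + ∑ a, (yy a - y' a) ^ 2)
        - gA (-(n : ℝ) / 2) t ((ξ - -x') ^ 2 + ∑ a, (yy a - y' a) ^ 2) := by
  have comb : ∀ a b : ℝ, Real.exp (-(a + b) / (4 * t))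
      = Real.exp (-a / (4 * t)) * Real.exp (-b / (4 * t)) := by
    intro a b; rw [← Real.exp_add]; congr 1; ring
  unfold KD gA
  rw [comb, comb, show (ξ - -x') ^ 2 = (ξ + x') ^ 2 by ring]
  ring

lemma PT (x' : ℝ) (y' : Fin (n - 1) → ℝ) (τ ξ : ℝ) (yy : Fin (n - 1) → ℝ) :
    ψ (K0 n hn R x' y' τ ξ yy ω)
      = gA (-(n : ℝ) / 2) τ ((ξ - x') ^ 2 + ∑ a, (yy a - y' a) ^ 2) * Fs n hn R ω ψ τ
        + gA (-(n : ℝ) / 2) τ ((ξ - -x') ^ 2 + ∑ a, (yy a - y' a) ^ 2) * Fs n hn R ω ψ τ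
        + (gA (-(n : ℝ) / 2) τ ((ξ - x') ^ 2 + ∑ a, (yy a - y' a) ^ 2) * Gs n hn R ω ψ τ
          - gA (-(n : ℝ) / 2) τ ((ξ - -x') ^ 2 + ∑ a, (yy a - y' a) ^ 2) * Gs n hn R ω ψ τ) := by
  rw [EXP hn R ω ψ τ ξ yy x' y', KN_eq, KD_eq]
  unfold Fs Gs
  ring

end Main
end ModelAux


theorem K0_model_heat_equation (n : ℕ) (hn : 0 < n)
    (R : Fin n → Fin n → Fin n → Fin n → ℝ)
    (hR : ∀ i j k l, R i j k l = - R j i k l)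
    (x' : ℝ) (hx' : 0 < x') (y' : Fin (n - 1) → ℝ)
    (t : ℝ) (ht : 0 < t) (x : ℝ) (y : Fin (n - 1) → ℝ)
    (ω : ExteriorAlgebra ℝ ((Fin n → ℝ) × (Fin n → ℝ)))
    (ψ : Module.Dual ℝ (ExteriorAlgebra ℝ ((Fin n → ℝ) × (Fin n → ℝ)))) :
    deriv (fun τ => ψ (K0 n hn R x' y' τ x y ω)) t -
        deriv (deriv fun ξ => ψ (K0 n hn R x' y' t ξ y ω)) x -
        (∑ a : Fin (n - 1),
          deriv (deriv fun s => ψ (K0 n hn R x' y' t x (Function.update y a s) ω)) (y a)) +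
        ψ ((mulL n (curvR n R) * K0 n hn R x' y' t x y) ω) =
      (KN n t x y x' y' - KD n t x y x' y') *
        ψ ((mulL n (curvR0 n hn R) * mulL n (expNegCurvR n R t)) ω) := by
  classical
  open ModelAux ModelAux2 in
  -- t-direction
  have hfunt : (fun τ => ψ (K0 n hn R x' y' τ x y ω)) = fun τ =>
      gA (-(n : ℝ) / 2) τ ((x - x') ^ 2 + ∑ a, (y a - y' a) ^ 2) * Fs n hn R ω ψ τ
        + gA (-(n : ℝ) / 2) τ ((x - -x') ^ 2 + ∑ a, (y a - y' a) ^ 2) * Fs n hn R ω ψ τ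
        + (gA (-(n : ℝ) / 2) τ ((x - x') ^ 2 + ∑ a, (y a - y' a) ^ 2) * Gs n hn R ω ψ τ
          - gA (-(n : ℝ) / 2) τ ((x - -x') ^ 2 + ∑ a, (y a - y' a) ^ 2) * Gs n hn R ω ψ τ) :=
    funext fun τ => PT n hn R ω ψ x' y' τ x y
  have hT : deriv (fun τ => ψ (K0 n hn R x' y' τ x y ω)) t =
      (gA (-(n : ℝ) / 2) t ((x - x') ^ 2 + ∑ a, (y a - y' a) ^ 2)
          * ((-(n : ℝ) / 2) / t + ((x - x') ^ 2 + ∑ a, (y a - y' a) ^ 2) / (4 * t ^ 2))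
          * Fs n hn R ω ψ t
        + gA (-(n : ℝ) / 2) t ((x - x') ^ 2 + ∑ a, (y a - y' a) ^ 2) * dFs n hn R ω ψ t
        + (gA (-(n : ℝ) / 2) t ((x - -x') ^ 2 + ∑ a, (y a - y' a) ^ 2)
          * ((-(n : ℝ) / 2) / t + ((x - -x') ^ 2 + ∑ a, (y a - y' a) ^ 2) / (4 * t ^ 2))
          * Fs n hn R ω ψ t
        + gA (-(n : ℝ) / 2) t ((x - -x') ^ 2 + ∑ a, (y a - y' a) ^ 2) * dFs n hn R ω ψ t))
      + ((gA (-(n : ℝ) / 2) t ((x - x') ^ 2 + ∑ a, (y a - y' a) ^ 2)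
          * ((-(n : ℝ) / 2) / t + ((x - x') ^ 2 + ∑ a, (y a - y' a) ^ 2) / (4 * t ^ 2))
          * Gs n hn R ω ψ t
        + gA (-(n : ℝ) / 2) t ((x - x') ^ 2 + ∑ a, (y a - y' a) ^ 2) * dGs n hn R ω ψ t)
        - (gA (-(n : ℝ) / 2) t ((x - -x') ^ 2 + ∑ a, (y a - y' a) ^ 2)
          * ((-(n : ℝ) / 2) / t + ((x - -x') ^ 2 + ∑ a, (y a - y' a) ^ 2) / (4 * t ^ 2))
          * Gs n hn R ω ψ t
        + gA (-(n : ℝ) / 2) t ((x - -x') ^ 2 + ∑ a, (y a - y' a) ^ 2) * dGs n hn R ω ψ t)) := by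
    rw [hfunt]
    exact (((hasDerivAt_gA_t (-(n : ℝ) / 2) ((x - x') ^ 2 + ∑ a, (y a - y' a) ^ 2) t ht).mul
        (hasDerivAt_Fs n hn R ω ψ t)).add
      ((hasDerivAt_gA_t (-(n : ℝ) / 2) ((x - -x') ^ 2 + ∑ a, (y a - y' a) ^ 2) t ht).mul
        (hasDerivAt_Fs n hn R ω ψ t))).add
      (((hasDerivAt_gA_t (-(n : ℝ) / 2) ((x - x') ^ 2 + ∑ a, (y a - y' a) ^ 2) t ht).mul
        (hasDerivAt_Gs n hn R ω ψ t)).sub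
      ((hasDerivAt_gA_t (-(n : ℝ) / 2) ((x - -x') ^ 2 + ∑ a, (y a - y' a) ^ 2) t ht).mul
        (hasDerivAt_Gs n hn R ω ψ t))) |>.deriv
  
  -- x-direction
  have hfunx : (fun ξ => ψ (K0 n hn R x' y' t ξ y ω)) = fun ξ =>
      ModelAux.gA (-(n : ℝ) / 2) t ((ξ - x') ^ 2 + (∑ a, (y a - y' a) ^ 2)) * Fs n hn R ω ψ t
        + ModelAux.gA (-(n : ℝ) / 2) t ((ξ - -x') ^ 2 + (∑ a, (y a - y' a) ^ 2)) * Fs n hn R ω ψ t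
        + (ModelAux.gA (-(n : ℝ) / 2) t ((ξ - x') ^ 2 + (∑ a, (y a - y' a) ^ 2)) * Gs n hn R ω ψ t
          - ModelAux.gA (-(n : ℝ) / 2) t ((ξ - -x') ^ 2 + (∑ a, (y a - y' a) ^ 2)) * Gs n hn R ω ψ t) :=
    funext fun ξ => ModelAux.PT n hn R ω ψ x' y' t ξ y
  have hdx1 : deriv (fun ξ => ψ (K0 n hn R x' y' t ξ y ω)) = fun ξ =>
      ModelAux.gA (-(n : ℝ) / 2) t ((ξ - x') ^ 2 + (∑ a, (y a - y' a) ^ 2)) * (-(ξ - x') / (2 * t)) * Fs n hn R ω ψ t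
        + ModelAux.gA (-(n : ℝ) / 2) t ((ξ - -x') ^ 2 + (∑ a, (y a - y' a) ^ 2)) * (-(ξ - -x') / (2 * t)) * Fs n hn R ω ψ t
        + (ModelAux.gA (-(n : ℝ) / 2) t ((ξ - x') ^ 2 + (∑ a, (y a - y' a) ^ 2)) * (-(ξ - x') / (2 * t)) * Gs n hn R ω ψ t
          - ModelAux.gA (-(n : ℝ) / 2) t ((ξ - -x') ^ 2 + (∑ a, (y a - y' a) ^ 2)) * (-(ξ - -x') / (2 * t)) * Gs n hn R ω ψ t) := by
    funext ξ
    rw [hfunx]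
    exact ((((ModelAux.hasDerivAt_gA_x (-(n : ℝ) / 2) t x' (∑ a, (y a - y' a) ^ 2) ht ξ).mul_const _).add
      ((ModelAux.hasDerivAt_gA_x (-(n : ℝ) / 2) t (-x') (∑ a, (y a - y' a) ^ 2) ht ξ).mul_const _)).add
      (((ModelAux.hasDerivAt_gA_x (-(n : ℝ) / 2) t x' (∑ a, (y a - y' a) ^ 2) ht ξ).mul_const _).sub
      ((ModelAux.hasDerivAt_gA_x (-(n : ℝ) / 2) t (-x') (∑ a, (y a - y' a) ^ 2) ht ξ).mul_const _))).deriv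
  have hdx2 : deriv (fun ξ =>
      ModelAux.gA (-(n : ℝ) / 2) t ((ξ - x') ^ 2 + (∑ a, (y a - y' a) ^ 2)) * (-(ξ - x') / (2 * t)) * Fs n hn R ω ψ t
        + ModelAux.gA (-(n : ℝ) / 2) t ((ξ - -x') ^ 2 + (∑ a, (y a - y' a) ^ 2)) * (-(ξ - -x') / (2 * t)) * Fs n hn R ω ψ t
        + (ModelAux.gA (-(n : ℝ) / 2) t ((ξ - x') ^ 2 + (∑ a, (y a - y' a) ^ 2)) * (-(ξ - x') / (2 * t)) * Gs n hn R ω ψ t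
          - ModelAux.gA (-(n : ℝ) / 2) t ((ξ - -x') ^ 2 + (∑ a, (y a - y' a) ^ 2)) * (-(ξ - -x') / (2 * t)) * Gs n hn R ω ψ t)) x =
      ModelAux.gA (-(n : ℝ) / 2) t ((x - x') ^ 2 + (∑ a, (y a - y' a) ^ 2)) * ((x - x') ^ 2 / (4 * t ^ 2) - 1 / (2 * t)) * Fs n hn R ω ψ t
        + ModelAux.gA (-(n : ℝ) / 2) t ((x - -x') ^ 2 + (∑ a, (y a - y' a) ^ 2)) * ((x - -x') ^ 2 / (4 * t ^ 2) - 1 / (2 * t)) * Fs n hn R ω ψ t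
        + (ModelAux.gA (-(n : ℝ) / 2) t ((x - x') ^ 2 + (∑ a, (y a - y' a) ^ 2)) * ((x - x') ^ 2 / (4 * t ^ 2) - 1 / (2 * t)) * Gs n hn R ω ψ t
          - ModelAux.gA (-(n : ℝ) / 2) t ((x - -x') ^ 2 + (∑ a, (y a - y' a) ^ 2)) * ((x - -x') ^ 2 / (4 * t ^ 2) - 1 / (2 * t)) * Gs n hn R ω ψ t) := by
    exact ((((ModelAux.hasDerivAt_gA_x2 (-(n : ℝ) / 2) t x' (∑ a, (y a - y' a) ^ 2) ht x).mul_const _).add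
      ((ModelAux.hasDerivAt_gA_x2 (-(n : ℝ) / 2) t (-x') (∑ a, (y a - y' a) ^ 2) ht x).mul_const _)).add
      (((ModelAux.hasDerivAt_gA_x2 (-(n : ℝ) / 2) t x' (∑ a, (y a - y' a) ^ 2) ht x).mul_const _).sub
      ((ModelAux.hasDerivAt_gA_x2 (-(n : ℝ) / 2) t (-x') (∑ a, (y a - y' a) ^ 2) ht x).mul_const _))).deriv
  -- y-direction
  have hdy2 : ∀ a : Fin (n - 1),
      deriv (deriv fun s => ψ (K0 n hn R x' y' t x (Function.update y a s) ω)) (y a) =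
        ModelAux.gA (-(n : ℝ) / 2) t ((x - x') ^ 2 + ∑ b, (y b - y' b) ^ 2) * ((y a - y' a) ^ 2 / (4 * t ^ 2) - 1 / (2 * t)) * Fs n hn R ω ψ t
          + ModelAux.gA (-(n : ℝ) / 2) t ((x - -x') ^ 2 + ∑ b, (y b - y' b) ^ 2) * ((y a - y' a) ^ 2 / (4 * t ^ 2) - 1 / (2 * t)) * Fs n hn R ω ψ t
          + (ModelAux.gA (-(n : ℝ) / 2) t ((x - x') ^ 2 + ∑ b, (y b - y' b) ^ 2) * ((y a - y' a) ^ 2 / (4 * t ^ 2) - 1 / (2 * t)) * Gs n hn R ω ψ t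
            - ModelAux.gA (-(n : ℝ) / 2) t ((x - -x') ^ 2 + ∑ b, (y b - y' b) ^ 2) * ((y a - y' a) ^ 2 / (4 * t ^ 2) - 1 / (2 * t)) * Gs n hn R ω ψ t) := by
    intro a
    have hfy : (fun s => ψ (K0 n hn R x' y' t x (Function.update y a s) ω)) = fun s =>
        ModelAux.gA (-(n : ℝ) / 2) t ((s - y' a) ^ 2 + ((x - x') ^ 2 + ∑ b ∈ Finset.univ.erase a, (y b - y' b) ^ 2)) * Fs n hn R ω ψ t
          + ModelAux.gA (-(n : ℝ) / 2) t ((s - y' a) ^ 2 + ((x - -x') ^ 2 + ∑ b ∈ Finset.univ.erase a, (y b - y' b) ^ 2)) * Fs n hn R ω ψ t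
          + (ModelAux.gA (-(n : ℝ) / 2) t ((s - y' a) ^ 2 + ((x - x') ^ 2 + ∑ b ∈ Finset.univ.erase a, (y b - y' b) ^ 2)) * Gs n hn R ω ψ t
            - ModelAux.gA (-(n : ℝ) / 2) t ((s - y' a) ^ 2 + ((x - -x') ^ 2 + ∑ b ∈ Finset.univ.erase a, (y b - y' b) ^ 2)) * Gs n hn R ω ψ t) := by
      funext s
      rw [ModelAux.PT n hn R ω ψ x' y' t x (Function.update y a s),
        ModelAux2.sum_update (n - 1) y y' a s,
        show (x - x') ^ 2 + ((s - y' a) ^ 2 + (∑ b ∈ Finset.univ.erase a, (y b - y' b) ^ 2)) = (s - y' a) ^ 2 + ((x - x') ^ 2 + ∑ b ∈ Finset.univ.erase a, (y b - y' b) ^ 2) from by ring,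
        show (x - -x') ^ 2 + ((s - y' a) ^ 2 + (∑ b ∈ Finset.univ.erase a, (y b - y' b) ^ 2)) = (s - y' a) ^ 2 + ((x - -x') ^ 2 + ∑ b ∈ Finset.univ.erase a, (y b - y' b) ^ 2) from by ring]
    have hdy1 : deriv (fun s => ψ (K0 n hn R x' y' t x (Function.update y a s) ω)) = fun s =>
        ModelAux.gA (-(n : ℝ) / 2) t ((s - y' a) ^ 2 + ((x - x') ^ 2 + ∑ b ∈ Finset.univ.erase a, (y b - y' b) ^ 2)) * (-(s - y' a) / (2 * t)) * Fs n hn R ω ψ t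
          + ModelAux.gA (-(n : ℝ) / 2) t ((s - y' a) ^ 2 + ((x - -x') ^ 2 + ∑ b ∈ Finset.univ.erase a, (y b - y' b) ^ 2)) * (-(s - y' a) / (2 * t)) * Fs n hn R ω ψ t
          + (ModelAux.gA (-(n : ℝ) / 2) t ((s - y' a) ^ 2 + ((x - x') ^ 2 + ∑ b ∈ Finset.univ.erase a, (y b - y' b) ^ 2)) * (-(s - y' a) / (2 * t)) * Gs n hn R ω ψ t
            - ModelAux.gA (-(n : ℝ) / 2) t ((s - y' a) ^ 2 + ((x - -x') ^ 2 + ∑ b ∈ Finset.univ.erase a, (y b - y' b) ^ 2)) * (-(s - y' a) / (2 * t)) * Gs n hn R ω ψ t) := by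
      funext s
      rw [hfy]
      exact ((((ModelAux.hasDerivAt_gA_x (-(n : ℝ) / 2) t (y' a) ((x - x') ^ 2 + ∑ b ∈ Finset.univ.erase a, (y b - y' b) ^ 2) ht s).mul_const _).add
        ((ModelAux.hasDerivAt_gA_x (-(n : ℝ) / 2) t (y' a) ((x - -x') ^ 2 + ∑ b ∈ Finset.univ.erase a, (y b - y' b) ^ 2) ht s).mul_const _)).add
        (((ModelAux.hasDerivAt_gA_x (-(n : ℝ) / 2) t (y' a) ((x - x') ^ 2 + ∑ b ∈ Finset.univ.erase a, (y b - y' b) ^ 2) ht s).mul_const _).sub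
        ((ModelAux.hasDerivAt_gA_x (-(n : ℝ) / 2) t (y' a) ((x - -x') ^ 2 + ∑ b ∈ Finset.univ.erase a, (y b - y' b) ^ 2) ht s).mul_const _))).deriv
    rw [hdy1]
    have e1 : (y a - y' a) ^ 2 + ((x - x') ^ 2 + ∑ b ∈ Finset.univ.erase a, (y b - y' b) ^ 2) = (x - x') ^ 2 + ∑ b, (y b - y' b) ^ 2 := by
      rw [← ModelAux2.recomb (n - 1) y y' a]; ring
    have e2 : (y a - y' a) ^ 2 + ((x - -x') ^ 2 + ∑ b ∈ Finset.univ.erase a, (y b - y' b) ^ 2) = (x - -x') ^ 2 + ∑ b, (y b - y' b) ^ 2 := by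
      rw [← ModelAux2.recomb (n - 1) y y' a]; ring
    have hd := ((((ModelAux.hasDerivAt_gA_x2 (-(n : ℝ) / 2) t (y' a) ((x - x') ^ 2 + ∑ b ∈ Finset.univ.erase a, (y b - y' b) ^ 2) ht (y a)).mul_const
        (Fs n hn R ω ψ t)).add
      ((ModelAux.hasDerivAt_gA_x2 (-(n : ℝ) / 2) t (y' a) ((x - -x') ^ 2 + ∑ b ∈ Finset.univ.erase a, (y b - y' b) ^ 2) ht (y a)).mul_const (Fs n hn R ω ψ t))).add
      (((ModelAux.hasDerivAt_gA_x2 (-(n : ℝ) / 2) t (y' a) ((x - x') ^ 2 + ∑ b ∈ Finset.univ.erase a, (y b - y' b) ^ 2) ht (y a)).mul_const (Gs n hn R ω ψ t)).sub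
      ((ModelAux.hasDerivAt_gA_x2 (-(n : ℝ) / 2) t (y' a) ((x - -x') ^ 2 + ∑ b ∈ Finset.univ.erase a, (y b - y' b) ^ 2) ht (y a)).mul_const (Gs n hn R ω ψ t)))).deriv
    refine hd.trans ?_
    rw [e1, e2]
  have hYsum : (∑ a : Fin (n - 1),
      deriv (deriv fun s => ψ (K0 n hn R x' y' t x (Function.update y a s) ω)) (y a)) =
      (ModelAux.gA (-(n : ℝ) / 2) t ((x - x') ^ 2 + ∑ b, (y b - y' b) ^ 2) * Fs n hn R ω ψ t + ModelAux.gA (-(n : ℝ) / 2) t ((x - -x') ^ 2 + ∑ b, (y b - y' b) ^ 2) * Fs n hn R ω ψ t + (ModelAux.gA (-(n : ℝ) / 2) t ((x - x') ^ 2 + ∑ b, (y b - y' b) ^ 2) * Gs n hn R ω ψ t - ModelAux.gA (-(n : ℝ) / 2) t ((x - -x') ^ 2 + ∑ b, (y b - y' b) ^ 2) * Gs n hn R ω ψ t))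
        * ((∑ b, (y b - y' b) ^ 2) / (4 * t ^ 2) - ((n : ℝ) - 1) / (2 * t)) := by
    rw [Finset.sum_congr rfl fun a _ => hdy2 a]
    have hfac : ∀ a : Fin (n - 1),
        ModelAux.gA (-(n : ℝ) / 2) t ((x - x') ^ 2 + ∑ b, (y b - y' b) ^ 2) * ((y a - y' a) ^ 2 / (4 * t ^ 2) - 1 / (2 * t)) * Fs n hn R ω ψ t
          + ModelAux.gA (-(n : ℝ) / 2) t ((x - -x') ^ 2 + ∑ b, (y b - y' b) ^ 2) * ((y a - y' a) ^ 2 / (4 * t ^ 2) - 1 / (2 * t)) * Fs n hn R ω ψ t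
          + (ModelAux.gA (-(n : ℝ) / 2) t ((x - x') ^ 2 + ∑ b, (y b - y' b) ^ 2) * ((y a - y' a) ^ 2 / (4 * t ^ 2) - 1 / (2 * t)) * Gs n hn R ω ψ t
            - ModelAux.gA (-(n : ℝ) / 2) t ((x - -x') ^ 2 + ∑ b, (y b - y' b) ^ 2) * ((y a - y' a) ^ 2 / (4 * t ^ 2) - 1 / (2 * t)) * Gs n hn R ω ψ t)
        = (ModelAux.gA (-(n : ℝ) / 2) t ((x - x') ^ 2 + ∑ b, (y b - y' b) ^ 2) * Fs n hn R ω ψ t + ModelAux.gA (-(n : ℝ) / 2) t ((x - -x') ^ 2 + ∑ b, (y b - y' b) ^ 2) * Fs n hn R ω ψ t + (ModelAux.gA (-(n : ℝ) / 2) t ((x - x') ^ 2 + ∑ b, (y b - y' b) ^ 2) * Gs n hn R ω ψ t - ModelAux.gA (-(n : ℝ) / 2) t ((x - -x') ^ 2 + ∑ b, (y b - y' b) ^ 2) * Gs n hn R ω ψ t)) * ((y a - y' a) ^ 2 / (4 * t ^ 2) - 1 / (2 * t)) :=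
      fun a => by ring
    rw [Finset.sum_congr rfl fun a _ => hfac a, ← Finset.mul_sum]
    congr 1
    rw [Finset.sum_sub_distrib, ← Finset.sum_div, Finset.sum_const, Finset.card_univ,
      Fintype.card_fin, nsmul_eq_mul, Nat.cast_sub (by omega : 1 ≤ n), Nat.cast_one]
    ring
  -- curvature terms
  have hRC : ψ ((mulL n (curvR n R) * K0 n hn R x' y' t x y) ω)
      = KN n t x y x' y' * ModelAux.Ps n hn R ω ψ t
        + KD n t x y x' y' * ModelAux.Qs n hn R ω ψ t :=
    ModelAux.RCT hn R ω ψ t x y x' y'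
  have hW : ψ ((mulL n (curvR0 n hn R) * mulL n (expNegCurvR n R t)) ω)
      = ModelAux.Ws n hn R ω ψ t :=
    ModelAux.WEXP hn R ω ψ t
  have h1 := ModelAux.ID1 n hn R ω ψ hR t
  have h2 := ModelAux.ID2 n hn R ω ψ hR t
  rw [hT, hdx1, hdx2, hYsum, hRC, hW, ModelAux.KN_eq, ModelAux.KD_eq]
  linear_combination (ModelAux.gA (-(n : ℝ) / 2) t ((x - x') ^ 2 + (∑ a, (y a - y' a) ^ 2)) + ModelAux.gA (-(n : ℝ) / 2) t ((x - -x') ^ 2 + (∑ a, (y a - y' a) ^ 2))) * h1 + (ModelAux.gA (-(n : ℝ) / 2) t ((x - x') ^ 2 + (∑ a, (y a - y' a) ^ 2)) - ModelAux.gA (-(n : ℝ) / 2) t ((x - -x') ^ 2 + (∑ a, (y a - y' a) ^ 2))) * h2
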